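/- arXiv:2205.14732 — 4 statements merged into one kernel-verified Lean document; each statement's English description precedes it below -/
import Mathlib

section
/- Let A be a nonzero subalgebra of B(X) such that there exists a positive integer n with A₁⋯Aₙ = 0 for all A₁,…,Aₙ ∈ A (A is a nilpotent algebra). Then A has a non-trivial hyperinvariant subspace: there is a closed subspace M of X with {0} ≠ M ≠ X that is invariant under every operator in A and under every operator commuting with all of A. -/
/-!
Choose a product `P = a₁ ⋯ aₖ` of elements of `A` that is nonzero while every longer product
vanishes (it exists by nilpotency and `A ≠ 0`). Then `P T = 0` for every `T ∈ A`, in particular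
`P² = (P a₁) a₂ ⋯ aₖ = 0`, so `{0} ≠ range P ⊆ ker P ≠ X`. The kernel of `P` is invariant under `A`
because `P A = 0`, and under the commutant of `A` because each such operator commutes with `P`.
-/

theorem exists_list_prod_ne_zero_forall_mul_eq_zero {R : Type*} [MonoidWithZero R] {A : Set R}
    (hA : ∃ T ∈ A, T ≠ 0)
    (hnil : ∃ n, ∀ l : List R, l.length = n → (∀ a ∈ l, a ∈ A) → l.prod = 0) :
    ∃ l : List R, l ≠ [] ∧ (∀ a ∈ l, a ∈ A) ∧ l.prod ≠ 0 ∧ ∀ T ∈ A, l.prod * T = 0 := by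
  classical
  obtain ⟨T, hTA, hT⟩ := hA
  have : Nontrivial R := ⟨⟨T, 0, hT⟩⟩
  have hpos : Nat.find hnil ≠ 0 := fun h =>
    (one_ne_zero : (1 : R) ≠ 0) (by simpa using Nat.find_spec hnil [] (by simp [h]) (by simp))
  obtain ⟨k, hk⟩ := Nat.exists_eq_succ_of_ne_zero hpos
  obtain ⟨l, hlen, hlA, hne⟩ : ∃ l : List R, l.length = k ∧ (∀ a ∈ l, a ∈ A) ∧ l.prod ≠ 0 := by
    simpa using Nat.find_min hnil (hk ▸ k.lt_succ_self)
  have hann : ∀ T ∈ A, l.prod * T = 0 := fun T' hT'A => by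
    simpa using Nat.find_spec hnil (l ++ [T']) (by simp [hlen, hk])
      (by simpa [or_imp, forall_and] using ⟨hlA, hT'A⟩)
  refine ⟨l, ?_, hlA, hne, hann⟩
  rintro rfl
  exact hT (by simpa using hann T hTA)

theorem List.prod_mul_self_eq_zero {R : Type*} [MonoidWithZero R] {A : Set R} {l : List R}
    (hl : l ≠ []) (hlA : ∀ a ∈ l, a ∈ A) (hann : ∀ T ∈ A, l.prod * T = 0) :
    l.prod * l.prod = 0 := by
  obtain ⟨a, l', rfl⟩ := List.exists_cons_of_ne_nil hl
  have hPa := hann a (hlA a List.mem_cons_self)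
  rw [List.prod_cons] at hPa ⊢
  rw [← mul_assoc, hPa, zero_mul]

section Kernel

variable {R M : Type*} [Semiring R] [TopologicalSpace M] [AddCommMonoid M] [Module R M]

theorem ContinuousLinearMap.ker_ne_bot_of_mul_self_eq_zero {P : M →L[R] M} (hP : P ≠ 0)
    (hPP : P * P = 0) : P.ker ≠ ⊥ := by
  obtain ⟨x, hx⟩ : ∃ x, P x ≠ 0 := by
    by_contra! h
    exact hP (ContinuousLinearMap.ext h)
  exact (Submodule.ne_bot_iff _).2 ⟨P x, LinearMap.mem_ker.2 (congrArg (· x) hPP), hx⟩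

theorem ContinuousLinearMap.ker_ne_top {P : M →L[R] M} (hP : P ≠ 0) : P.ker ≠ ⊤ :=
  fun h => hP (ContinuousLinearMap.coe_injective (LinearMap.ker_eq_top.mp h))

theorem Commute.apply_mem_ker {S P : M →L[R] M} (h : Commute S P) {x : M}
    (hx : x ∈ P.ker) : S x ∈ P.ker := by
  rw [LinearMap.mem_ker] at hx ⊢
  change (P * S) x = 0
  rw [← h.eq]
  exact (congrArg S hx).trans (map_zero S)

end Kernel

theorem nilpotent_algebra_hyperinvariant_general
    {X : Type*} [NormedAddCommGroup X] [NormedSpace ℂ X]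
    (A : Set (X →L[ℂ] X))
    (hA0 : ∃ T ∈ A, T ≠ 0)
    (hnil : ∃ n : ℕ, 0 < n ∧ ∀ l : List (X →L[ℂ] X),
      l.length = n → (∀ a ∈ l, a ∈ A) → l.prod = 0) :
    ∃ M : Submodule ℂ X, IsClosed (M : Set X) ∧ M ≠ ⊥ ∧ M ≠ ⊤ ∧
      (∀ T ∈ A, ∀ x ∈ M, T x ∈ M) ∧
      (∀ S : X →L[ℂ] X, (∀ T ∈ A, S * T = T * S) → ∀ x ∈ M, S x ∈ M) := by
  obtain ⟨l, hl, hlA, hP, hann⟩ :=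
    exists_list_prod_ne_zero_forall_mul_eq_zero hA0 (hnil.imp fun _ h => h.2)
  refine ⟨l.prod.ker, l.prod.isClosed_ker,
    ContinuousLinearMap.ker_ne_bot_of_mul_self_eq_zero hP (l.prod_mul_self_eq_zero hl hlA hann),
    ContinuousLinearMap.ker_ne_top hP, fun T hT x _ => ?_, fun S hS x hx => ?_⟩
  · exact LinearMap.mem_ker.2 (congrArg (· x) (hann T hT))
  · exact (Commute.list_prod_right l S fun a ha => hS a (hlA a ha)).apply_mem_ker hx

/-- A nonzero nilpotent algebra of bounded operators on an infinite-dimensional complex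
Banach space has a non-trivial hyperinvariant subspace: a closed subspace, different from
`{0}` and `X`, invariant under every operator in the algebra and under every operator
commuting with the whole algebra. -/
theorem nilpotent_algebra_hyperinvariant
    {X : Type*} [NormedAddCommGroup X] [NormedSpace ℂ X] [CompleteSpace X]
    (hinf : ¬ FiniteDimensional ℂ X)
    (A : Set (X →L[ℂ] X))
    (hAadd : ∀ a ∈ A, ∀ b ∈ A, a + b ∈ A)
    (hAmul : ∀ a ∈ A, ∀ b ∈ A, a * b ∈ A)
    (hAsmul : ∀ (c : ℂ), ∀ a ∈ A, c • a ∈ A)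
    (hA0 : ∃ T ∈ A, T ≠ 0)
    (hnil : ∃ n : ℕ, 0 < n ∧ ∀ l : List (X →L[ℂ] X),
      l.length = n → (∀ a ∈ l, a ∈ A) → l.prod = 0) :
    ∃ M : Submodule ℂ X, IsClosed (M : Set X) ∧ M ≠ ⊥ ∧ M ≠ ⊤ ∧
      (∀ T ∈ A, ∀ x ∈ M, T x ∈ M) ∧
      (∀ S : X →L[ℂ] X, (∀ T ∈ A, S * T = T * S) → ∀ x ∈ M, S x ∈ M) :=
  nilpotent_algebra_hyperinvariant_general A hA0 hnil
end

section
/- Let λ ∈ ℂ and let S be a linear subspace of B(X) with A² = λA for every A ∈ S, and suppose S contains a non-scalar operator A. Then ker(A) is a non-trivial closed subspace of X invariant under every operator in S and under every operator commuting with A. -/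
/-!
Polarising `A² = λA` on `A + B` shows that any two operators of `S` anticommute, so
`A (B x) = -B (A x)`: like an operator commuting with `A`, every `B ∈ S` semiconjugates `A` to
some operator and hence preserves `ker A`. The kernel is nonzero because `A` annihilates the
range of `A - λ`, which vanishes only for scalar `A`.
-/

theorem mul_add_mul_eq_zero_of_mul_self_eq_smul {R 𝕜 : Type*} [NonUnitalNonAssocRing R]
    [Semiring 𝕜] [Module 𝕜 R] {a b : R} {c : 𝕜} (ha : a * a = c • a) (hb : b * b = c • b)
    (hab : (a + b) * (a + b) = c • (a + b)) : a * b + b * a = 0 := by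
  rw [add_mul, mul_add, mul_add, ha, hb, smul_add] at hab
  calc a * b + b * a = (c • a + a * b + (b * a + c • b)) - (c • a + c • b) := by abel
    _ = 0 := by rw [hab, sub_self]

namespace Module.End

variable {R M : Type*}

theorem mapsTo_ker_of_mul_eq_mul [Semiring R] [AddCommMonoid M] [Module R M]
    {f g u : Module.End R M} (h : f * g = u * f) :
    Set.MapsTo g (LinearMap.ker f) (LinearMap.ker f) := fun x hx => by
  rw [SetLike.mem_coe, LinearMap.mem_ker] at hx ⊢
  rw [← mul_apply, h, mul_apply, hx, map_zero]

theorem ker_ne_bot_of_mul_self_eq_smul [CommRing R] [AddCommGroup M] [Module R M]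
    {f : Module.End R M} {c : R} (h : f * f = c • f) (hf : f ≠ c • 1) : LinearMap.ker f ≠ ⊥ := by
  intro hker
  have hrange : LinearMap.range (f - c • 1) ≤ LinearMap.ker f := by
    rw [LinearMap.range_le_ker_iff, ← mul_eq_comp, mul_sub, mul_smul_comm, mul_one, h, sub_self]
  rw [hker, le_bot_iff, LinearMap.range_eq_bot, sub_eq_zero] at hrange
  exact hf hrange

end Module.End

open Module.End ContinuousLinearMap

theorem kernel_hyperinvariant_of_sq_eq_smul_general
    {X : Type*} [NormedAddCommGroup X] [NormedSpace ℂ X]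
    (lam : ℂ) (S : Submodule ℂ (X →L[ℂ] X))
    (h : ∀ A ∈ S, A * A = lam • A)
    (A : X →L[ℂ] X) (hA : A ∈ S)
    (hns : ∀ c : ℂ, A ≠ c • (1 : X →L[ℂ] X)) :
    IsClosed ((LinearMap.ker (A : X →ₗ[ℂ] X) : Submodule ℂ X) : Set X) ∧
      LinearMap.ker (A : X →ₗ[ℂ] X) ≠ ⊥ ∧ LinearMap.ker (A : X →ₗ[ℂ] X) ≠ ⊤ ∧
      (∀ B ∈ S, ∀ x ∈ LinearMap.ker (A : X →ₗ[ℂ] X), B x ∈ LinearMap.ker (A : X →ₗ[ℂ] X)) ∧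
      (∀ T : X →L[ℂ] X, T * A = A * T → ∀ x ∈ LinearMap.ker (A : X →ₗ[ℂ] X), T x ∈ LinearMap.ker (A : X →ₗ[ℂ] X)) := by
  have hsq : (A : X →ₗ[ℂ] X) * A = lam • (A : X →ₗ[ℂ] X) := by
    rw [← toLinearMap_mul, h A hA, toLinearMap_smul]
  refine ⟨A.isClosed_ker, ker_ne_bot_of_mul_self_eq_smul hsq fun hA' => hns lam ?_,
    fun htop => hns 0 ?_, fun B hB => mapsTo_ker_of_mul_eq_mul (u := ↑(-B)) ?_,
    fun T hT => mapsTo_ker_of_mul_eq_mul (u := (T : X →ₗ[ℂ] X)) ?_⟩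
  · rw [← coe_inj, hA', toLinearMap_smul, toLinearMap_one]
  · rw [zero_smul, ← coe_inj, toLinearMap_zero, ← LinearMap.ker_eq_top, htop]
  · have hanti := mul_add_mul_eq_zero_of_mul_self_eq_smul (h A hA) (h B hB) (h _ (S.add_mem hA hB))
    rw [← toLinearMap_mul, ← toLinearMap_mul, coe_inj, neg_mul]
    exact eq_neg_of_add_eq_zero_left hanti
  · rw [← toLinearMap_mul, ← toLinearMap_mul, hT]

/-- If `S` is a linear subspace of operators with `A² = λA` for all `A ∈ S` and `A ∈ S` is
non-scalar, then `ker A` is a non-trivial closed subspace invariant under every operator in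
`S` and under every operator commuting with `A`. -/
theorem kernel_hyperinvariant_of_sq_eq_smul
    {X : Type*} [NormedAddCommGroup X] [NormedSpace ℂ X] [CompleteSpace X]
    (lam : ℂ) (S : Submodule ℂ (X →L[ℂ] X))
    (h : ∀ A ∈ S, A * A = lam • A)
    (A : X →L[ℂ] X) (hA : A ∈ S)
    (hns : ∀ c : ℂ, A ≠ c • (1 : X →L[ℂ] X)) :
    IsClosed ((LinearMap.ker (A : X →ₗ[ℂ] X) : Submodule ℂ X) : Set X) ∧
      LinearMap.ker (A : X →ₗ[ℂ] X) ≠ ⊥ ∧ LinearMap.ker (A : X →ₗ[ℂ] X) ≠ ⊤ ∧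
      (∀ B ∈ S, ∀ x ∈ LinearMap.ker (A : X →ₗ[ℂ] X), B x ∈ LinearMap.ker (A : X →ₗ[ℂ] X)) ∧
      (∀ T : X →L[ℂ] X, T * A = A * T → ∀ x ∈ LinearMap.ker (A : X →ₗ[ℂ] X), T x ∈ LinearMap.ker (A : X →ₗ[ℂ] X)) :=
  kernel_hyperinvariant_of_sq_eq_smul_general lam S h A hA hns
end

section
/- Let R be an associative (not necessarily unital) ring which is an algebra over a field of characteristic zero, and suppose there is n ≥ 1 with xⁿ = 0 for all x ∈ R (R is a nil-algebra of bounded index n). Then R is nilpotent: there exists N (one may take N = 2ⁿ − 1) such that every product of N elements of R is zero. -/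
/-!
Higman's argument, run in the unitization `A = F ⊕ R` relative to a two-sided ideal `I`, with
`S ⊴ A` the augmentation ideal. Suppose `s ^ (m + 1) ∈ I` for all `s ∈ S`. Evaluating
`(x + t • y) ^ (m + 1)` at `m + 2` distinct scalars `t` and inverting a Vandermonde matrix (this is
where characteristic zero enters) gives the linearized identity `∑_{i+j=m} xⁱ y xʲ ∈ I`. Expanding
`∑_{j+l=m} ∑_{i+k=m} xⁱ z yʲ xᵏ yˡ` in the two possible orders and applying that identity to the
inner sums then leaves `(m + 1) • xᵐ z yᵐ ∈ I` for `x, y, z ∈ S`. Hence, for `J = I + (sᵐ : s ∈ S)`,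
we have `J S J ⊆ I`; by induction on `m`, products of `2 ^ m - 1` elements of `S` lie in `J`, so
products of `2 ^ (m + 1) - 1 = 2 (2 ^ m - 1) + 1` elements lie in `I`.
-/

/-- The product `a * l₁ * l₂ * ⋯` of a nonempty family of elements of a (possibly non-unital)
ring, given by a head `a` and tail list `l`. -/
def nprod {R : Type*} [Mul R] (a : R) (l : List R) : R :=
  l.foldl (· * ·) a

open Finset Polynomial

theorem Submodule.mem_of_forall_sum_pow_smul_mem {F M : Type*} [Field F] [CharZero F]
    [AddCommGroup M] [Module F M] (I : Submodule F M) {N : ℕ} (v : Fin N → M)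
    (h : ∀ t : Fin N, ∑ d : Fin N, ((t : ℕ) : F) ^ (d : ℕ) • v d ∈ I) (d : Fin N) : v d ∈ I := by
  set V := Matrix.vandermonde fun t : Fin N => ((t : ℕ) : F)
  have hV : IsUnit V := by
    rw [Matrix.isUnit_iff_isUnit_det, isUnit_iff_ne_zero, Matrix.det_vandermonde_ne_zero_iff]
    exact fun s t hst => Fin.ext (Nat.cast_injective hst)
  obtain ⟨c, hc⟩ := Matrix.vecMul_surjective_iff_isUnit.2 hV (Pi.single d 1)
  have hvd : v d = ∑ t, c t • ∑ e : Fin N, ((t : ℕ) : F) ^ (e : ℕ) • v e := calc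
    v d = ∑ e, (Pi.single d (1 : F) : Fin N → F) e • v e := by simp
    _ = ∑ e, (∑ t, c t * V t e) • v e := by rw [← hc]; rfl
    _ = _ := by
      simp only [Finset.sum_smul, Finset.smul_sum, smul_smul, V, Matrix.vandermonde_apply]
      exact Finset.sum_comm
  rw [hvd]
  exact I.sum_mem fun t _ => I.smul_mem _ (h t)

theorem Polynomial.coeff_zero_linear_pow {A : Type*} [Semiring A] (x y : A) (k : ℕ) :
    ((C y * X + C x) ^ k).coeff 0 = x ^ k := by
  induction k with
  | zero => simp
  | succ k ih => simp [pow_succ, mul_coeff_zero, ih]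

theorem Polynomial.coeff_one_linear_pow {A : Type*} [Semiring A] (x y : A) (k : ℕ) :
    ((C y * X + C x) ^ (k + 1)).coeff 1 = ∑ ij ∈ antidiagonal k, x ^ ij.1 * y * x ^ ij.2 := by
  induction k with
  | zero => simp
  | succ k ih =>
    rw [pow_succ, mul_add, ← mul_assoc, coeff_add, coeff_mul_X, coeff_mul_C, coeff_mul_C, ih,
      coeff_zero_linear_pow, Finset.Nat.sum_antidiagonal_succ', Finset.sum_mul]
    simp only [pow_succ, pow_zero, mul_one, mul_assoc]

theorem add_smul_pow_eq_sum_coeff_linear_pow {F A : Type*} [Field F] [Ring A] [Algebra F A]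
    (x y : A) (k : ℕ) (t : F) :
    (x + t • y) ^ k = ∑ d : Fin (k + 1), t ^ (d : ℕ) • ((C y * X + C x) ^ k).coeff d := by
  let φ := eval₂RingHom' (RingHom.id A) (algebraMap F A t) (Algebra.commute_algebraMap_right t)
  have hdeg : ((C y * X + C x) ^ k).natDegree < k + 1 :=
    Nat.lt_succ_of_le <| natDegree_pow_le.trans <|
      (Nat.mul_le_mul_left k natDegree_linear_le).trans (mul_one k).le
  calc (x + t • y) ^ k = φ ((C y * X + C x) ^ k) := by
        rw [map_pow]; simp [φ, Algebra.smul_def, Algebra.commutes t y, add_comm]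
    _ = ∑ d ∈ range (k + 1), ((C y * X + C x) ^ k).coeff d * algebraMap F A t ^ d :=
        eval₂_eq_sum_range' _ hdeg _
    _ = _ := by
        rw [Finset.sum_range]
        refine Finset.sum_congr rfl fun d _ => ?_
        rw [← map_pow, ← Algebra.commutes, ← Algebra.smul_def]

theorem Submodule.sum_antidiagonal_pow_mul_pow_mem {F A : Type*} [Field F] [CharZero F] [Ring A]
    [Algebra F A] (I : Submodule F A) {x y : A} {m : ℕ} (h : ∀ t : F, (x + t • y) ^ (m + 1) ∈ I) :
    ∑ ij ∈ antidiagonal m, x ^ ij.1 * y * x ^ ij.2 ∈ I := by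
  rw [← coeff_one_linear_pow]
  exact I.mem_of_forall_sum_pow_smul_mem
    (fun d : Fin (m + 2) => ((C y * X + C x) ^ (m + 1)).coeff d)
    (fun t => add_smul_pow_eq_sum_coeff_linear_pow x y (m + 1) ((t : ℕ) : F) ▸ h _) 1

namespace TwoSidedIdeal

variable (F : Type*) [Field F] [CharZero F] {A : Type*} [Ring A] (S I : TwoSidedIdeal A)

def sandwichLeft (q : A) : TwoSidedIdeal A :=
  .mk' {p | ∀ c ∈ S, p * c * q ∈ I} (by simp [I.zero_mem])
    (fun hp hp' c hc => by rw [add_mul, add_mul]; exact I.add_mem (hp c hc) (hp' c hc))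
    (fun hp c hc => by rw [neg_mul, neg_mul]; exact I.neg_mem (hp c hc))
    (fun {x _} hp c hc => by
      rw [mul_assoc, mul_assoc, ← mul_assoc _ c]; exact I.mul_mem_left x _ (hp c hc))
    (fun {_ x} hp c hc => by rw [mul_assoc _ x]; exact hp _ (S.mul_mem_left x c hc))

def sandwichRight (p : A) : TwoSidedIdeal A :=
  .mk' {q | ∀ c ∈ S, p * c * q ∈ I} (by simp [I.zero_mem])
    (fun hq hq' c hc => by rw [mul_add]; exact I.add_mem (hq c hc) (hq' c hc))
    (fun hq c hc => by rw [mul_neg]; exact I.neg_mem (hq c hc))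
    (fun {x _} hq c hc => by rw [← mul_assoc, mul_assoc p]; exact hq _ (S.mul_mem_right c x hc))
    (fun {_ x} hq c hc => by rw [← mul_assoc]; exact I.mul_mem_right _ x (hq c hc))

theorem pow_mul_mul_pow_mem [Algebra F A] {m : ℕ} (h : ∀ s ∈ S, s ^ (m + 1) ∈ I) {x z y : A}
    (hx : x ∈ S) (hz : z ∈ S) (hy : y ∈ S) : x ^ m * z * y ^ m ∈ I := by
  let IF := I.asIdeal.restrictScalars F
  have lin : ∀ u ∈ S, ∀ v ∈ S, ∑ ij ∈ antidiagonal m, u ^ ij.1 * v * u ^ ij.2 ∈ I :=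
    fun u hu v hv => IF.sum_antidiagonal_pow_mul_pow_mem fun t =>
      h _ (S.add_mem hu (by rw [Algebra.smul_def]; exact S.mul_mem_left _ _ hv))
  have hpow : ∀ k ≠ 0, x ^ k ∈ S := fun k hk => by
    obtain ⟨k, rfl⟩ := Nat.exists_eq_succ_of_ne_zero hk
    rw [pow_succ]; exact S.mul_mem_left _ _ hx
  let g : ℕ × ℕ → A := fun ik =>
    x ^ ik.1 * z * ∑ jl ∈ antidiagonal m, y ^ jl.1 * x ^ ik.2 * y ^ jl.2
  -- Both sides of `this` are `∑ xⁱ z yʲ xᵏ yˡ` over `i + k = m`, `j + l = m`. On the right every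
  -- inner sum is a linearization in `x`; in `g` every inner sum with `k ≠ 0` is one in `y`.
  have htotal : ∑ ik ∈ antidiagonal m, g ik ∈ I := by
    have : ∑ ik ∈ antidiagonal m, g ik = ∑ jl ∈ antidiagonal m,
        (∑ ik ∈ antidiagonal m, x ^ ik.1 * (z * y ^ jl.1) * x ^ ik.2) * y ^ jl.2 := by
      simp only [g, Finset.mul_sum, Finset.sum_mul, mul_assoc]
      exact Finset.sum_comm
    rw [this]
    exact sum_mem fun jl _ => I.mul_mem_right _ _ (lin x hx _ (S.mul_mem_right _ _ hz))
  have hrest : ∑ ik ∈ (antidiagonal m).erase (m, 0), g ik ∈ I := by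
    refine sum_mem fun ik hik => I.mul_mem_left _ _ (lin y hy _ (hpow ik.2 ?_))
    rintro h0
    obtain ⟨hne, hik⟩ := mem_erase.1 hik
    rw [HasAntidiagonal.mem_antidiagonal, h0, add_zero] at hik
    exact hne (Prod.ext hik h0)
  have hg : g (m, 0) = ((m + 1 : ℕ) : F) • (x ^ m * z * y ^ m) := by
    simp only [g, pow_zero, mul_one]
    rw [sum_congr rfl fun jl hjl => by rw [← pow_add, HasAntidiagonal.mem_antidiagonal.1 hjl],
      sum_const, Finset.Nat.card_antidiagonal, Nat.cast_smul_eq_nsmul, mul_smul_comm]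
  have hmem : g (m, 0) ∈ I := by
    rw [← add_sum_erase _ g (a := (m, 0)) (by simp)] at htotal
    exact (add_mem_cancel_right hrest).1 htotal
  rw [hg] at hmem
  exact (IF.smul_mem_iff (Nat.cast_ne_zero.2 m.succ_ne_zero)).1 hmem

theorem mul_mul_mem_of_mem_sup_span [Algebra F A] {m : ℕ} (h : ∀ s ∈ S, s ^ (m + 1) ∈ I)
    {p c q : A}
    (hp : p ∈ I ⊔ span ((· ^ m) '' S)) (hc : c ∈ S) (hq : q ∈ I ⊔ span ((· ^ m) '' S)) :
    p * c * q ∈ I := by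
  have hright : ∀ s ∈ S, I ⊔ span ((· ^ m) '' S) ≤ sandwichRight S I (s ^ m) := fun s hs =>
    sup_le (fun q hq => (mem_mk' ..).2 fun c _ => I.mul_mem_left _ _ hq) <| span_le.2 <| by
      rintro _ ⟨t, ht, rfl⟩
      exact (mem_mk' ..).2 fun c hc => pow_mul_mul_pow_mem F S I h hs hc ht
  have hleft : I ⊔ span ((· ^ m) '' S) ≤ sandwichLeft S I q :=
    sup_le (fun p hp => (mem_mk' ..).2 fun c _ => I.mul_mem_right _ _ (I.mul_mem_right _ _ hp))
      <| span_le.2 <| by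
        rintro _ ⟨s, hs, rfl⟩
        exact (mem_mk' ..).2 fun c hc => ((mem_mk' ..).1 (hright s hs hq)) c hc
  exact (mem_mk' ..).1 (hleft hp) c hc

theorem list_prod_mem_of_forall_pow_mem [Algebra F A] {n : ℕ} (h : ∀ s ∈ S, s ^ n ∈ I)
    {l : List A} (hl : ∀ x ∈ l, x ∈ S) (hlen : l.length = 2 ^ n - 1) : l.prod ∈ I := by
  induction n generalizing I l with
  | zero =>
    have : (1 : A) ∈ I := by simpa using h 0 S.zero_mem
    simpa using I.mul_mem_left l.prod 1 this
  | succ m ih =>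
    have hJ : ∀ s ∈ S, s ^ m ∈ I ⊔ span ((· ^ m) '' S) := fun s hs =>
      mem_sup_right (subset_span ⟨s, hs, rfl⟩)
    have hk : 2 ^ m - 1 < l.length := by
      have := Nat.one_le_two_pow (n := m)
      rw [hlen, pow_succ]; omega
    rw [← List.take_append_drop (2 ^ m - 1) l, List.drop_eq_getElem_cons hk, List.prod_append,
      List.prod_cons, ← mul_assoc]
    exact mul_mul_mem_of_mem_sup_span F S I h
      (ih _ hJ (fun x hx => hl x (List.mem_of_mem_take hx)) (by rw [List.length_take]; omega))
      (hl _ (List.getElem_mem hk))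
      (ih _ hJ (fun x hx => hl x (List.mem_of_mem_drop hx)) (by rw [List.length_drop]; omega))

end TwoSidedIdeal

theorem Unitization.inr_nprod {F R : Type*} [CommSemiring F] [NonUnitalSemiring R] [Module F R]
    [SMulCommClass F R R] [IsScalarTower F R R] (a : R) (l : List R) :
    (inr (nprod a l) : Unitization F R) = inr a * (l.map inr).prod := by
  induction l generalizing a with
  | nil => simp [nprod]
  | cons b l ih =>
    rw [List.map_cons, List.prod_cons, ← mul_assoc, ← inr_mul, ← ih]
    rfl

theorem nagata_higman_general
    {F : Type*} [Field F] [CharZero F]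
    {R : Type*} [NonUnitalRing R] [Module F R] [SMulCommClass F R R] [IsScalarTower F R R]
    (n : ℕ)
    (hnil : ∀ x : R, nprod x (List.replicate (n - 1) x) = 0) :
    ∃ N : ℕ, 0 < N ∧ ∀ (a : R) (l : List R), l.length = N - 1 → nprod a l = 0 := by
  let S := TwoSidedIdeal.ker (Unitization.fstHom F R)
  have hS : ∀ x ∈ S, x = Unitization.inr x.snd := fun x hx => by
    rw [TwoSidedIdeal.mem_ker] at hx
    ext <;> simp_all
  have hnilS : ∀ x ∈ S, x ^ (n - 1 + 1) ∈ (⊥ : TwoSidedIdeal (Unitization F R)) := fun x hx => by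
    rw [hS x hx, TwoSidedIdeal.mem_bot, pow_succ', ← List.prod_replicate, ← List.map_replicate,
      ← Unitization.inr_nprod, hnil, Unitization.inr_zero]
  have hN : 1 < 2 ^ (n - 1 + 1) := Nat.one_lt_two_pow (n - 1).succ_ne_zero
  refine ⟨2 ^ (n - 1 + 1) - 1, by omega, fun a l hl => Unitization.inr_injective (R := F) ?_⟩
  rw [Unitization.inr_nprod, Unitization.inr_zero, ← List.prod_cons, ← List.map_cons,
    ← TwoSidedIdeal.mem_bot]
  refine TwoSidedIdeal.list_prod_mem_of_forall_pow_mem F S ⊥ hnilS (fun x hx => ?_)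
    (by rw [List.length_map, List.length_cons]; omega)
  obtain ⟨r, -, rfl⟩ := List.mem_map.1 hx
  simp [S, TwoSidedIdeal.mem_ker]

/-- Nagata–Higman theorem: a (not necessarily unital) algebra over a field of characteristic
zero in which `xⁿ = 0` for every element `x` (a nil-algebra of bounded index `n`) is
nilpotent: there is `N ≥ 1` such that every product of `N` elements vanishes. -/
theorem nagata_higman
    {F : Type*} [Field F] [CharZero F]
    {R : Type*} [NonUnitalRing R] [Module F R] [SMulCommClass F R R] [IsScalarTower F R R]
    (n : ℕ) (hn : 0 < n)
    (hnil : ∀ x : R, nprod x (List.replicate (n - 1) x) = 0) :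
    ∃ N : ℕ, 0 < N ∧ ∀ (a : R) (l : List R), l.length = N - 1 → nprod a l = 0 :=
  nagata_higman_general (F := F) n hnil
end

section
/- Let X be a complex Banach space, K ∈ B(X) a nonzero compact operator, and T ∈ B(X) such that TK = KT and for every A in the unital algebra generated by T and K the operator AK is quasinilpotent. If additionally dim X = ∞, then there exists a non-trivial closed subspace invariant under both T and K. (Special case: if AK is quasinilpotent for all A in an algebra A containing the identity and K ≠ 0 is compact with AK quasinilpotent for all A ∈ A, then A has a non-trivial invariant subspace.) -/
/-!
If some nonzero `y` has a non-dense orbit `𝒜 y` under the algebra `𝒜` generated by `T` and `K`,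
the closure of that orbit is the invariant subspace. Otherwise we run Hilden's proof of
Lomonosov's lemma, which only needs `K` itself to be quasinilpotent and to commute with `𝒜`.
Pick `x` with `K x ≠ 0` and a closed ball `D` around `x` such that `S = closure (K D)` is a
compact set avoiding `0`. Dense orbits and compactness give a bound `c` such that every `y ∈ S`
is sent into `D` by some `A ∈ 𝒜` with `‖A‖ ≤ c`; then `y ↦ K (A y)` maps `S` into `S`. Iterating,
and moving `K` to the right past the elements of `𝒜`, gives `Bₙ ∈ 𝒜` with `‖Bₙ‖ ≤ cⁿ` and
`Bₙ (Kⁿ⁺¹ x) ∈ S`. Quasinilpotence makes `cⁿ ‖Kⁿ‖ → 0`, so these points tend to `0 ∈ S`.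
-/

open Metric Set Filter Topology

section Spectral

variable {A : Type*} [NormedRing A] [NormedAlgebra ℂ A] [CompleteSpace A]

theorem eventually_norm_pow_le_of_spectralRadius_lt {a : A} {r : ℝ}
    (h : spectralRadius ℂ a < ENNReal.ofReal r) : ∀ᶠ n : ℕ in atTop, ‖a ^ n‖ ≤ r ^ n := by
  filter_upwards
    [(spectrum.pow_norm_pow_one_div_tendsto_nhds_spectralRadius a).eventually_lt_const h,
      eventually_ne_atTop 0] with n hn hn0
  have hroot : ‖a ^ n‖ ^ (1 / n : ℝ) ≤ r := (ENNReal.ofReal_lt_ofReal_iff'.1 hn).1.le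
  calc ‖a ^ n‖ = (‖a ^ n‖ ^ (1 / n : ℝ)) ^ n := by
        rw [one_div, Real.rpow_inv_natCast_pow (norm_nonneg _) hn0]
    _ ≤ r ^ n := pow_le_pow_left₀ (by positivity) hroot n

theorem tendsto_pow_mul_norm_pow_of_spectralRadius_eq_zero {a : A} (ha : spectralRadius ℂ a = 0)
    (c : ℝ) : Tendsto (fun n : ℕ => c ^ n * ‖a ^ n‖) atTop (𝓝 0) := by
  set r := (|c| + 1)⁻¹
  have hr : 0 < r := by positivity
  have hcr : |c| * r < 1 := by
    rw [← div_eq_mul_inv, div_lt_one (by positivity)]; linarith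
  refine squeeze_zero_norm' ?_ (tendsto_pow_atTop_nhds_zero_of_lt_one (by positivity) hcr)
  filter_upwards [eventually_norm_pow_le_of_spectralRadius_lt (a := a) (r := r)
    (by rw [ha]; exact ENNReal.ofReal_pos.2 hr)] with n hn
  rw [norm_mul, norm_pow, Real.norm_eq_abs, norm_norm, mul_pow]
  exact mul_le_mul_of_nonneg_left hn (by positivity)

end Spectral

theorem exists_pos_notMem_closure_image_closedBall {α β : Type*} [PseudoMetricSpace α]
    [MetricSpace β] {f : α → β} {x : α} (hf : ContinuousAt f x) {p : β} (hp : p ≠ f x) :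
    ∃ r > 0, p ∉ closure (f '' closedBall x r) := by
  have hε : 0 < dist p (f x) / 2 := by have := dist_pos.2 hp; positivity
  obtain ⟨r, hr, hfr⟩ := (nhds_basis_closedBall.tendsto_iff nhds_basis_closedBall).1 hf _ hε
  refine ⟨r, hr, fun hp' => ?_⟩
  have hsub : closure (f '' closedBall x r) ⊆ closedBall (f x) (dist p (f x) / 2) :=
    closure_minimal (image_subset_iff.2 hfr) isClosed_closedBall
  have := mem_closedBall.1 (hsub hp')
  linarith [dist_pos.2 hp]

section Orbit

variable {𝕜 X : Type*} [NontriviallyNormedField 𝕜] [NormedAddCommGroup X] [NormedSpace 𝕜 X]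

namespace Subalgebra

variable (𝒜 : Subalgebra 𝕜 (X →L[𝕜] X))

noncomputable def orbit (y : X) : Submodule 𝕜 X :=
  (Subalgebra.toSubmodule 𝒜).map (ContinuousLinearMap.apply 𝕜 X y : (X →L[𝕜] X) →ₗ[𝕜] X)

theorem mem_orbit {y z : X} : z ∈ 𝒜.orbit y ↔ ∃ A ∈ 𝒜, A y = z := by
  simp [orbit]

theorem self_mem_orbit (y : X) : y ∈ 𝒜.orbit y :=
  (𝒜.mem_orbit).2 ⟨1, 𝒜.one_mem, rfl⟩

theorem orbit_mem_invtSubmodule {A : X →L[𝕜] X} (hA : A ∈ 𝒜) (y : X) :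
    𝒜.orbit y ∈ Module.End.invtSubmodule (A : X →ₗ[𝕜] X) := by
  rw [Module.End.mem_invtSubmodule]
  intro z hz
  obtain ⟨B, hB, rfl⟩ := (𝒜.mem_orbit).1 hz
  exact (𝒜.mem_orbit).2 ⟨A * B, 𝒜.mul_mem hA hB, rfl⟩

theorem exists_invariant_of_not_dense_orbit {y : X} (hy : y ≠ 0)
    (hd : ¬ Dense (𝒜.orbit y : Set X)) :
    ∃ M : Submodule 𝕜 X, IsClosed (M : Set X) ∧ M ≠ ⊥ ∧ M ≠ ⊤ ∧
      ∀ A ∈ 𝒜, ∀ x ∈ M, A x ∈ M := by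
  refine ⟨(𝒜.orbit y).topologicalClosure, Submodule.isClosed_topologicalClosure _, ?_, ?_,
    fun A hA => Submodule.topologicalClosure_mem_invtSubmodule (𝒜.orbit_mem_invtSubmodule hA y)⟩
  · exact (Submodule.ne_bot_iff _).2
      ⟨y, Submodule.le_topologicalClosure _ (𝒜.self_mem_orbit y), hy⟩
  · rwa [Ne, ← Submodule.dense_iff_topologicalClosure_eq_top]

theorem exists_norm_le_apply_mem_of_isCompact (hdense : ∀ y ≠ 0, Dense (𝒜.orbit y : Set X))
    {S U : Set X} (hS : IsCompact S) (h0 : 0 ∉ S) (hU : IsOpen U) (hU' : U.Nonempty) :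
    ∃ c, ∀ y ∈ S, ∃ A ∈ 𝒜, ‖A‖ ≤ c ∧ A y ∈ U := by
  have hcover : S ⊆ ⋃ A ∈ (𝒜 : Set (X →L[𝕜] X)), A ⁻¹' U := by
    intro y hy
    obtain ⟨z, hzU, hz⟩ := (hdense y (ne_of_mem_of_not_mem hy h0)).inter_open_nonempty U hU hU'
    obtain ⟨A, hA, rfl⟩ := (𝒜.mem_orbit).1 hz
    exact mem_iUnion₂.2 ⟨A, hA, hzU⟩
  obtain ⟨t, ht𝒜, ht, hSt⟩ :=
    hS.elim_finite_subcover_image (fun A _ => A.continuous.isOpen_preimage U hU) hcover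
  obtain ⟨c, hc⟩ := (ht.image (‖·‖)).bddAbove
  refine ⟨c, fun y hy => ?_⟩
  obtain ⟨A, hAt, hAy⟩ := mem_iUnion₂.1 (hSt hy)
  exact ⟨A, ht𝒜 hAt, hc (mem_image_of_mem _ hAt), hAy⟩

theorem exists_norm_le_pow_apply_pow_mem {K : X →L[𝕜] X} (hK : ∀ A ∈ 𝒜, Commute K A)
    {S : Set X} {c : ℝ} (hstep : ∀ y ∈ S, ∃ A ∈ 𝒜, ‖A‖ ≤ c ∧ K (A y) ∈ S) {x : X}
    (hx : K x ∈ S) (n : ℕ) : ∃ B ∈ 𝒜, ‖B‖ ≤ c ^ n ∧ B ((K ^ (n + 1)) x) ∈ S := by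
  induction n with
  | zero =>
    exact ⟨1, 𝒜.one_mem, by rw [pow_zero]; exact ContinuousLinearMap.norm_id_le, by simpa using hx⟩
  | succ n ih =>
    obtain ⟨B, hB, hBn, hBx⟩ := ih
    obtain ⟨A, hA, hAn, hKA⟩ := hstep _ hBx
    have hAB : (A * B) ((K ^ (n + 2)) x) = K (A (B ((K ^ (n + 1)) x))) := by
      rw [pow_succ' K (n + 1), ← mul_apply_eq_comp, ← mul_assoc,
        ← (hK _ (𝒜.mul_mem hA hB)).eq]
      rfl
    refine ⟨A * B, 𝒜.mul_mem hA hB, ?_, hAB ▸ hKA⟩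
    calc ‖A * B‖ ≤ ‖A‖ * ‖B‖ := norm_mul_le A B
      _ ≤ c * c ^ n := mul_le_mul hAn hBn (norm_nonneg B) ((norm_nonneg A).trans hAn)
      _ = c ^ (n + 1) := (pow_succ' c n).symm

end Subalgebra

end Orbit

namespace Subalgebra

variable {X : Type*} [NormedAddCommGroup X] [NormedSpace ℂ X] [CompleteSpace X]

theorem spectralRadius_ne_zero_of_dense_orbit (𝒜 : Subalgebra ℂ (X →L[ℂ] X))
    (hdense : ∀ y ≠ 0, Dense (𝒜.orbit y : Set X)) {K : X →L[ℂ] X} (hK : IsCompactOperator K)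
    (hK0 : K ≠ 0) (hcomm : ∀ A ∈ 𝒜, Commute K A) : spectralRadius ℂ K ≠ 0 := by
  intro hr
  obtain ⟨x, hx⟩ : ∃ x, K x ≠ 0 := by
    by_contra! h
    exact hK0 (ContinuousLinearMap.ext h)
  obtain ⟨r, hr0, h0⟩ :=
    exists_pos_notMem_closure_image_closedBall K.continuous.continuousAt hx.symm
  set S := closure (K '' closedBall x r)
  obtain ⟨c, hc⟩ := 𝒜.exists_norm_le_apply_mem_of_isCompact hdense
    (hK.isCompact_closure_image_of_bounded isBounded_closedBall) h0 isOpen_ball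
    ⟨x, mem_ball_self hr0⟩
  have hstep : ∀ y ∈ S, ∃ A ∈ 𝒜, ‖A‖ ≤ c ∧ K (A y) ∈ S := fun y hy =>
    (hc y hy).imp fun A ⟨hA, hAn, hAy⟩ =>
      ⟨hA, hAn, subset_closure (mem_image_of_mem K (ball_subset_closedBall hAy))⟩
  choose B hB𝒜 hBn hBS using 𝒜.exists_norm_le_pow_apply_pow_mem hcomm hstep
    (subset_closure (mem_image_of_mem K (mem_closedBall_self hr0.le)))
  have hbound (n : ℕ) : ‖B n ((K ^ (n + 1)) x)‖ ≤ c ^ n * ‖K ^ n‖ * (‖K‖ * ‖x‖) :=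
    calc ‖B n ((K ^ (n + 1)) x)‖ ≤ ‖B n‖ * ‖(K ^ n) (K x)‖ := by
          rw [pow_succ, mul_apply_eq_comp]; exact (B n).le_opNorm _
      _ ≤ c ^ n * (‖K ^ n‖ * (‖K‖ * ‖x‖)) :=
          mul_le_mul (hBn n) (((K ^ n).le_opNorm _).trans (by gcongr; exact K.le_opNorm x))
            (norm_nonneg _) ((norm_nonneg _).trans (hBn n))
      _ = c ^ n * ‖K ^ n‖ * (‖K‖ * ‖x‖) := by ring
  have hlim : Tendsto (fun n => B n ((K ^ (n + 1)) x)) atTop (𝓝 0) := by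
    refine squeeze_zero_norm hbound ?_
    simpa using (tendsto_pow_mul_norm_pow_of_spectralRadius_eq_zero hr c).mul_const (‖K‖ * ‖x‖)
  exact h0 (isClosed_closure.mem_of_tendsto hlim (Eventually.of_forall hBS))

end Subalgebra

theorem invariant_subspace_of_quasinilpotent_products_general
    {X : Type*} [NormedAddCommGroup X] [NormedSpace ℂ X] [CompleteSpace X]
    (K T : X →L[ℂ] X) (hK : IsCompactOperator ⇑K) (hK0 : K ≠ 0)
    (hcomm : T * K = K * T)
    (hq : ∀ A ∈ Algebra.adjoin ℂ ({T, K} : Set (X →L[ℂ] X)), spectralRadius ℂ (A * K) = 0) :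
    ∃ M : Submodule ℂ X, IsClosed (M : Set X) ∧ M ≠ ⊥ ∧ M ≠ ⊤ ∧
      (∀ x ∈ M, T x ∈ M) ∧ (∀ x ∈ M, K x ∈ M) := by
  set 𝒜 := Algebra.adjoin ℂ ({T, K} : Set (X →L[ℂ] X))
  have hT𝒜 : T ∈ 𝒜 := Algebra.subset_adjoin (by simp)
  have hK𝒜 : K ∈ 𝒜 := Algebra.subset_adjoin (by simp)
  have hK_comm : ∀ A ∈ 𝒜, Commute K A := fun A hA =>
    Algebra.commute_of_mem_adjoin_of_forall_mem_commute hA <| by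
      rintro _ (rfl | rfl); exacts [hcomm.symm, .refl _]
  have hKq : spectralRadius ℂ K = 0 := by simpa using hq 1 𝒜.one_mem
  obtain ⟨y, hy, hyd⟩ : ∃ y, y ≠ 0 ∧ ¬ Dense (𝒜.orbit y : Set X) := by
    by_contra! hdense
    exact 𝒜.spectralRadius_ne_zero_of_dense_orbit hdense hK hK0 hK_comm hKq
  obtain ⟨M, hM, hMbot, hMtop, hM𝒜⟩ := 𝒜.exists_invariant_of_not_dense_orbit hy hyd
  exact ⟨M, hM, hMbot, hMtop, hM𝒜 T hT𝒜, hM𝒜 K hK𝒜⟩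

/-- Lomonosov-type statement: if `K` is a nonzero compact operator commuting with `T`, on an
infinite-dimensional complex Banach space, and `AK` is quasinilpotent for every `A` in the
unital algebra generated by `T` and `K`, then `T` and `K` have a common non-trivial closed
invariant subspace. -/
theorem invariant_subspace_of_quasinilpotent_products
    {X : Type*} [NormedAddCommGroup X] [NormedSpace ℂ X] [CompleteSpace X]
    (hinf : ¬ FiniteDimensional ℂ X)
    (K T : X →L[ℂ] X) (hK : IsCompactOperator ⇑K) (hK0 : K ≠ 0)
    (hcomm : T * K = K * T)
    (hq : ∀ A ∈ Algebra.adjoin ℂ ({T, K} : Set (X →L[ℂ] X)), spectralRadius ℂ (A * K) = 0) :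
    ∃ M : Submodule ℂ X, IsClosed (M : Set X) ∧ M ≠ ⊥ ∧ M ≠ ⊤ ∧
      (∀ x ∈ M, T x ∈ M) ∧ (∀ x ∈ M, K x ∈ M) :=
  invariant_subspace_of_quasinilpotent_products_general K T hK hK0 hcomm hq
end
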